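/- Let s_* ≤ s be natural numbers, let θ ∈ ℝ^d with ‖θ‖₀ ≤ s, let θ_* ∈ ℝ^d with ‖θ_*‖₀ ≤ s_*, let g ∈ ℝ^d, let η > 0, and let θ' = H_s(θ − η g). Set S̃ = supp(θ') ∪ supp(θ) ∪ supp(θ_*). Then ‖θ' − θ + η g|_{S̃}‖² − η² ‖g|_{supp(θ') \ (supp(θ) ∪ supp(θ_*))}‖² ≤ (2 s_*/(s + s_*)) ‖θ_* − θ + η g|_{S̃}‖². -/

import Mathlib

open scoped BigOperators

open Classical in
noncomputable def supp {d : ℕ} (x : EuclideanSpace ℝ (Fin d)) : Finset (Fin d) :=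
  Finset.univ.filter fun j => x j ≠ 0

noncomputable def norm0 {d : ℕ} (x : EuclideanSpace ℝ (Fin d)) : ℕ := (supp x).card

noncomputable def restrict {d : ℕ} (x : EuclideanSpace ℝ (Fin d)) (S : Finset (Fin d)) :
    EuclideanSpace ℝ (Fin d) := WithLp.toLp 2 (fun j => if j ∈ S then x j else 0)

/-- `w` is a hard thresholding of `v` at sparsity level `s`:
`w ∈ argmin {‖u − v‖ : ‖u‖₀ ≤ s}`. -/
def IsHardThreshold {d : ℕ} (s : ℕ) (v w : EuclideanSpace ℝ (Fin d)) : Prop :=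
  norm0 w ≤ s ∧ ∀ u : EuclideanSpace ℝ (Fin d), norm0 u ≤ s → ‖w - v‖ ≤ ‖u - v‖

/-! Write `v = θ - η • g` and `T = supp θ'`. Optimality of `θ'` forces it to agree with `v` on `T`,
and forces every `v j ^ 2` off `T` to be at most every `v k ^ 2` on `T` (and to vanish if `#T < s`).
Every norm in the statement is then a sum of `v j ^ 2` over a cell of the Venn diagram of `T`,
`supp θ` and `supp θstar`. Comparing each term with a value `a` separating the entries off `T`
from those on `T` reduces the inequality to a linear inequality between the sizes of the cells,
which follows from `#T = s`, `#(supp θ) ≤ s`, `#(supp θstar) ≤ sstar` and `sstar ≤ s`; if `#T < s`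
one can take `a = 0`. -/

open Finset

section

variable {ι : Type*} [DecidableEq ι]

theorem two_mul_div_add_le_one {s s' : ℝ} (h : s' ≤ s) (h0 : 0 ≤ s') :
    2 * s' / (s + s') ≤ 1 :=
  div_le_one_of_le₀ (by linarith) (by linarith)

theorem le_two_mul_div_add_mul {s s' : ℝ} (h : s' ≤ s) (h0 : 0 ≤ s') :
    s' ≤ 2 * s' / (s + s') * s := by
  rcases h0.eq_or_lt with rfl | hpos
  · simp
  · rw [div_mul_eq_mul_div, le_div_iff₀ (by linarith)]
    nlinarith

theorem one_sub_mul_card_add_card_le {s s' : ℕ} {c : ℝ} (hc0 : 0 ≤ c) (hc1 : c ≤ 1)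
    (hcs : s' ≤ c * s) {P Q T : Finset ι} (hP : #P ≤ s) (hQ : #Q ≤ s') (hT : #T = s) :
    (1 - c) * #((P \ Q) \ T) + #(Q \ T) ≤ (1 + c) * #((T \ Q) \ P) + c * #((T \ Q) ∩ P) := by
  have hTQP : #((T \ Q) \ P) + #((T \ Q) ∩ P) = #(T \ Q) := card_sdiff_add_card_inter _ _
  have hTQ : #(T \ Q) + #(T ∩ Q) = #T := card_sdiff_add_card_inter _ _
  have hQT : #(Q \ T) + #(T ∩ Q) = #Q := inter_comm Q T ▸ card_sdiff_add_card_inter _ _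
  have hPQT : #((P \ Q) \ T) + #((T \ Q) ∩ P) = #(P \ Q) := by
    rw [show (T \ Q) ∩ P = (P \ Q) ∩ T by ext; simp; tauto]
    exact card_sdiff_add_card_inter _ _
  have hPQ : #(P \ Q) ≤ #P := card_le_card sdiff_subset
  have hT' : (#((T \ Q) \ P) : ℝ) + #((T \ Q) ∩ P) + #(T ∩ Q) = s := by
    exact_mod_cast (by omega : #((T \ Q) \ P) + #((T \ Q) ∩ P) + #(T ∩ Q) = s)
  have hQ' : (#(Q \ T) : ℝ) + #(T ∩ Q) ≤ s' := by
    exact_mod_cast (by omega : #(Q \ T) + #(T ∩ Q) ≤ s')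
  have hP' : (#((P \ Q) \ T) : ℝ) + #((T \ Q) ∩ P) ≤ s := by
    exact_mod_cast (by omega : #((P \ Q) \ T) + #((T \ Q) ∩ P) ≤ s)
  nlinarith [mul_nonneg hc0 (#((T \ Q) \ P)).cast_nonneg,
    mul_le_mul_of_nonneg_left hP' (sub_nonneg.2 hc1)]

theorem sum_sdiff_sub_sum_sdiff_le_mul {s s' : ℕ} (hs : s' ≤ s) {P Q T : Finset ι}
    (hP : #P ≤ s) (hQ : #Q ≤ s') {f : ι → ℝ} {a : ℝ} (ha0 : 0 ≤ a) (ha : a = 0 ∨ #T = s)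
    (hout : ∀ j ∉ T, f j ≤ a) (hin : ∀ k ∈ T, a ≤ f k) :
    ∑ j ∈ (P ∪ Q) \ T, f j - ∑ j ∈ T \ (P ∪ Q), f j ≤
      2 * s' / (s + s') * ∑ j ∈ (P ∪ T) \ Q, f j := by
  set c : ℝ := 2 * s' / (s + s')
  have hc0 : 0 ≤ c := by positivity
  have hc1 : c ≤ 1 := two_mul_div_add_le_one (by exact_mod_cast hs) s'.cast_nonneg
  have hcs : (s' : ℝ) ≤ c * s := le_two_mul_div_add_mul (by exact_mod_cast hs) s'.cast_nonneg
  set A₁ := (P \ Q) \ T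
  set A₂ := Q \ T
  set B := (T \ Q) \ P
  set C := (T \ Q) ∩ P
  have hleft : ∑ j ∈ (P ∪ Q) \ T, f j = ∑ j ∈ A₁, f j + ∑ j ∈ A₂, f j := by
    rw [show (P ∪ Q) \ T = A₁ ∪ A₂ by ext; simp [A₁, A₂]; tauto,
      sum_union (disjoint_left.2 (by simp [A₁, A₂]; tauto))]
  have hright : ∑ j ∈ (P ∪ T) \ Q, f j = ∑ j ∈ A₁, f j + ∑ j ∈ B, f j + ∑ j ∈ C, f j := by
    rw [show (P ∪ T) \ Q = A₁ ∪ (B ∪ C) by ext; simp [A₁, B, C]; tauto,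
      sum_union (disjoint_left.2 (by simp [A₁, B, C]; tauto)),
      sum_union (disjoint_left.2 (by simp [B, C]; tauto)), add_assoc]
  have hTB : T \ (P ∪ Q) = B := by ext; simp [B]; tauto
  have hA₁ : ∑ j ∈ A₁, f j ≤ #A₁ * a := by
    simpa using sum_le_card_nsmul A₁ f a fun j hj => hout j (by simp [A₁] at hj; tauto)
  have hA₂ : ∑ j ∈ A₂, f j ≤ #A₂ * a := by
    simpa using sum_le_card_nsmul A₂ f a fun j hj => hout j (by simp [A₂] at hj; tauto)
  have hB : #B * a ≤ ∑ j ∈ B, f j := by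
    simpa using card_nsmul_le_sum B f a fun j hj => hin j (by simp [B] at hj; tauto)
  have hC : #C * a ≤ ∑ j ∈ C, f j := by
    simpa using card_nsmul_le_sum C f a fun j hj => hin j (by simp [C] at hj; tauto)
  have hcount : ((1 - c) * #A₁ + #A₂) * a ≤ ((1 + c) * #B + c * #C) * a := by
    rcases ha with rfl | hT
    · simp
    · exact mul_le_mul_of_nonneg_right (one_sub_mul_card_add_card_le hc0 hc1 hcs hP hQ hT) ha0
  rw [hleft, hright, hTB]
  nlinarith [mul_le_mul_of_nonneg_left hA₁ (sub_nonneg.2 hc1),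
    mul_le_mul_of_nonneg_left hB (by linarith : 0 ≤ 1 + c), mul_le_mul_of_nonneg_left hC hc0]

end

section Sparse

variable {d : ℕ}

theorem mem_supp {x : EuclideanSpace ℝ (Fin d)} {j : Fin d} : j ∈ supp x ↔ x j ≠ 0 := by
  simp [supp]

theorem apply_eq_zero_of_notMem_supp {x : EuclideanSpace ℝ (Fin d)} {j : Fin d}
    (h : j ∉ supp x) : x j = 0 :=
  not_not.1 (mt mem_supp.2 h)

theorem restrict_apply (x : EuclideanSpace ℝ (Fin d)) (S : Finset (Fin d)) (j : Fin d) :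
    restrict x S j = if j ∈ S then x j else 0 :=
  rfl

theorem norm_restrict_sq (x : EuclideanSpace ℝ (Fin d)) (S : Finset (Fin d)) :
    ‖restrict x S‖ ^ 2 = ∑ j ∈ S, x j ^ 2 := by
  simp [EuclideanSpace.real_norm_sq_eq, restrict_apply, ite_pow, sum_ite_mem]

theorem norm0_restrict_le (x : EuclideanSpace ℝ (Fin d)) (S : Finset (Fin d)) :
    norm0 (restrict x S) ≤ #S :=
  card_le_card fun j hj => by
    by_contra hjS
    exact mem_supp.1 hj (by simp [restrict_apply, hjS])

theorem sub_restrict_eq_restrict_compl (x : EuclideanSpace ℝ (Fin d)) (S : Finset (Fin d)) :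
    x - restrict x S = restrict x Sᶜ := by
  ext j
  by_cases hj : j ∈ S <;> simp [restrict_apply, hj]

theorem sub_add_smul_restrict {x θ : EuclideanSpace ℝ (Fin d)} {S : Finset (Fin d)}
    (hx : supp x ⊆ S) (hθ : supp θ ⊆ S) (g : EuclideanSpace ℝ (Fin d)) (η : ℝ) :
    x - θ + η • restrict g S = restrict (x - (θ - η • g)) S := by
  ext j
  by_cases hj : j ∈ S
  · simp [restrict_apply, hj]
    ring
  · simp [restrict_apply, hj, apply_eq_zero_of_notMem_supp fun h => hj (hx h),
      apply_eq_zero_of_notMem_supp fun h => hj (hθ h)]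

theorem sq_mul_norm_restrict_sq {θ : EuclideanSpace ℝ (Fin d)} {U : Finset (Fin d)}
    (hU : Disjoint U (supp θ)) (g : EuclideanSpace ℝ (Fin d)) (η : ℝ) :
    η ^ 2 * ‖restrict g U‖ ^ 2 = ∑ j ∈ U, (θ - η • g) j ^ 2 := by
  rw [norm_restrict_sq, mul_sum]
  refine sum_congr rfl fun j hj => ?_
  rw [PiLp.sub_apply, apply_eq_zero_of_notMem_supp (disjoint_left.1 hU hj), PiLp.smul_apply,
    smul_eq_mul, zero_sub, neg_sq, mul_pow]

theorem sum_sq_le_norm_sub_add_smul_restrict_sq {x θ : EuclideanSpace ℝ (Fin d)}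
    {S U : Finset (Fin d)} (hx : supp x ⊆ S) (hθ : supp θ ⊆ S) (hUS : U ⊆ S)
    (hUx : Disjoint U (supp x)) (g : EuclideanSpace ℝ (Fin d)) (η : ℝ) :
    ∑ j ∈ U, (θ - η • g) j ^ 2 ≤ ‖x - θ + η • restrict g S‖ ^ 2 := by
  rw [sub_add_smul_restrict hx hθ, norm_restrict_sq]
  calc ∑ j ∈ U, (θ - η • g) j ^ 2 = ∑ j ∈ U, (x - (θ - η • g)) j ^ 2 :=
        sum_congr rfl fun j hj => by
          rw [PiLp.sub_apply _ x, apply_eq_zero_of_notMem_supp (disjoint_left.1 hUx hj), zero_sub,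
            neg_sq]
    _ ≤ ∑ j ∈ S, (x - (θ - η • g)) j ^ 2 :=
        sum_le_sum_of_subset_of_nonneg hUS fun _ _ _ => sq_nonneg _

end Sparse

namespace IsHardThreshold

variable {d s : ℕ} {v w : EuclideanSpace ℝ (Fin d)}

theorem norm_sub_sq_le (hw : IsHardThreshold s v w) {U : Finset (Fin d)} (hU : #U ≤ s) :
    ‖w - v‖ ^ 2 ≤ ∑ j ∈ Uᶜ, v j ^ 2 := by
  have h := hw.2 _ ((norm0_restrict_le v U).trans hU)
  rw [norm_sub_rev (restrict v U), sub_restrict_eq_restrict_compl] at h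
  rw [← norm_restrict_sq]
  exact pow_le_pow_left₀ (norm_nonneg _) h 2

theorem apply_eq_of_mem_supp (hw : IsHardThreshold s v w) {j : Fin d} (hj : j ∈ supp w) :
    w j = v j := by
  have h := hw.norm_sub_sq_le hw.1
  rw [EuclideanSpace.real_norm_sq_eq, ← sum_add_sum_compl (supp w)] at h
  have hoff : ∑ k ∈ (supp w)ᶜ, (w - v) k ^ 2 = ∑ k ∈ (supp w)ᶜ, v k ^ 2 :=
    sum_congr rfl fun k hk => by simp [apply_eq_zero_of_notMem_supp (mem_compl.1 hk)]
  have hon : ∑ k ∈ supp w, (w - v) k ^ 2 = 0 :=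
    le_antisymm (by linarith) (sum_nonneg fun _ _ => sq_nonneg _)
  have := (sum_eq_zero_iff_of_nonneg fun _ _ => sq_nonneg _).1 hon j hj
  simpa [sub_eq_zero] using this

theorem sum_sq_sub_eq (hw : IsHardThreshold s v w) (S : Finset (Fin d)) :
    ∑ j ∈ S, (w - v) j ^ 2 = ∑ j ∈ S \ supp w, v j ^ 2 := by
  rw [sdiff_eq_filter, sum_filter]
  refine sum_congr rfl fun j _ => ?_
  by_cases hj : j ∈ supp w
  · simp [hj, hw.apply_eq_of_mem_supp hj]
  · simp [hj, apply_eq_zero_of_notMem_supp hj]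

theorem norm_sub_add_smul_restrict_sq {θ g : EuclideanSpace ℝ (Fin d)} {η : ℝ}
    {S : Finset (Fin d)} (hw : IsHardThreshold s (θ - η • g) w) (hwS : supp w ⊆ S)
    (hθS : supp θ ⊆ S) :
    ‖w - θ + η • restrict g S‖ ^ 2 = ∑ j ∈ S \ supp w, (θ - η • g) j ^ 2 := by
  rw [sub_add_smul_restrict hwS hθS, norm_restrict_sq, hw.sum_sq_sub_eq]

theorem sum_sq_le_sum_sq_supp (hw : IsHardThreshold s v w) {U : Finset (Fin d)} (hU : #U ≤ s) :
    ∑ j ∈ U, v j ^ 2 ≤ ∑ j ∈ supp w, v j ^ 2 := by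
  have h := hw.norm_sub_sq_le hU
  rw [EuclideanSpace.real_norm_sq_eq, hw.sum_sq_sub_eq, ← compl_eq_univ_sdiff] at h
  have hU' := sum_add_sum_compl U fun j => v j ^ 2
  have hw' := sum_add_sum_compl (supp w) fun j => v j ^ 2
  linarith

theorem sq_le_sq_of_notMem_of_mem (hw : IsHardThreshold s v w) {j k : Fin d}
    (hj : j ∉ supp w) (hk : k ∈ supp w) : v j ^ 2 ≤ v k ^ 2 := by
  have hcard : #(insert j ((supp w).erase k)) ≤ s := by
    have := card_insert_le j ((supp w).erase k)
    have := card_erase_of_mem hk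
    have := card_pos.2 ⟨k, hk⟩
    have : #(supp w) ≤ s := hw.1
    omega
  have h := hw.sum_sq_le_sum_sq_supp hcard
  rw [sum_insert fun h => hj (mem_of_mem_erase h), ← sum_erase_add _ _ hk] at h
  linarith

theorem apply_eq_zero_of_card_lt (hw : IsHardThreshold s v w) (hlt : #(supp w) < s) {j : Fin d}
    (hj : j ∉ supp w) : v j = 0 := by
  have h := hw.sum_sq_le_sum_sq_supp (U := insert j (supp w))
    (by rw [card_insert_of_notMem hj]; exact hlt)
  rw [sum_insert hj] at h
  exact pow_eq_zero_iff two_ne_zero |>.1 (le_antisymm (by linarith) (sq_nonneg _))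

theorem exists_threshold (hw : IsHardThreshold s v w) :
    ∃ a, 0 ≤ a ∧ (a = 0 ∨ #(supp w) = s) ∧
      (∀ j ∉ supp w, v j ^ 2 ≤ a) ∧ ∀ k ∈ supp w, a ≤ v k ^ 2 := by
  rcases hw.1.lt_or_eq with hlt | heq
  · exact ⟨0, le_rfl, .inl rfl, fun j hj => by simp [hw.apply_eq_zero_of_card_lt hlt hj],
      fun k _ => sq_nonneg _⟩
  rcases (supp w).eq_empty_or_nonempty with hT | hT
  -- then `s = 0`, and any common upper bound of the `v i ^ 2` separates
  · exact ⟨∑ i, v i ^ 2, sum_nonneg fun i _ => sq_nonneg _, .inr heq,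
      fun j _ => single_le_sum (fun i _ => sq_nonneg (v i)) (mem_univ j), by simp [hT]⟩
  · exact ⟨(supp w).inf' hT fun k => v k ^ 2, le_inf' hT _ fun k _ => sq_nonneg _, .inr heq,
      fun j hj => le_inf' hT _ fun k hk => hw.sq_le_sq_of_notMem_of_mem hj hk,
      fun k hk => inf'_le _ hk⟩

end IsHardThreshold

theorem hardThreshold_step_bound_general {d s sstar : ℕ} (hss : sstar ≤ s)
    (θ θstar g θ' : EuclideanSpace ℝ (Fin d)) (η : ℝ)
    (hθ : norm0 θ ≤ s) (hθstar : norm0 θstar ≤ sstar)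
    (hHT : IsHardThreshold s (θ - η • g) θ') :
    ‖θ' - θ + η • restrict g (supp θ' ∪ supp θ ∪ supp θstar)‖ ^ 2
        - η ^ 2 * ‖restrict g (supp θ' \ (supp θ ∪ supp θstar))‖ ^ 2
      ≤ 2 * (sstar : ℝ) / ((s : ℝ) + sstar)
          * ‖θstar - θ + η • restrict g (supp θ' ∪ supp θ ∪ supp θstar)‖ ^ 2 := by
  set S := supp θ' ∪ supp θ ∪ supp θstar
  have hθ'S : supp θ' ⊆ S := fun j hj => by simp [S, hj]
  have hθS : supp θ ⊆ S := fun j hj => by simp [S, hj]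
  have hθstarS : supp θstar ⊆ S := fun j hj => by simp [S, hj]
  have hS : S \ supp θ' = (supp θ ∪ supp θstar) \ supp θ' := by ext; simp [S]; tauto
  obtain ⟨a, ha0, ha, hout, hin⟩ := hHT.exists_threshold
  rw [hHT.norm_sub_add_smul_restrict_sq hθ'S hθS, hS,
    sq_mul_norm_restrict_sq (disjoint_left.2 fun j hj => by simp at hj; tauto)]
  refine (sum_sdiff_sub_sum_sdiff_le_mul hss hθ hθstar ha0 ha hout hin).trans
    (mul_le_mul_of_nonneg_left ?_ (by positivity))
  exact sum_sq_le_norm_sub_add_smul_restrict_sq hθstarS hθS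
    (fun j hj => by simp [S] at hj ⊢; tauto) (disjoint_left.2 fun j hj => (mem_sdiff.1 hj).2) g η

/-- With `S̃ = supp θ' ∪ supp θ ∪ supp θ_*` and `θ' = H_s(θ − η g)`,
`‖θ' − θ + η g|_{S̃}‖² − η² ‖g|_{supp θ' \ (supp θ ∪ supp θ_*)}‖²
  ≤ (2 s_*/(s + s_*)) ‖θ_* − θ + η g|_{S̃}‖²`. -/
theorem hardThreshold_step_bound {d s sstar : ℕ} (hss : sstar ≤ s)
    (θ θstar g θ' : EuclideanSpace ℝ (Fin d)) (η : ℝ) (hη : 0 < η)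
    (hθ : norm0 θ ≤ s) (hθstar : norm0 θstar ≤ sstar)
    (hHT : IsHardThreshold s (θ - η • g) θ') :
    ‖θ' - θ + η • restrict g (supp θ' ∪ supp θ ∪ supp θstar)‖ ^ 2
        - η ^ 2 * ‖restrict g (supp θ' \ (supp θ ∪ supp θstar))‖ ^ 2
      ≤ 2 * (sstar : ℝ) / ((s : ℝ) + sstar)
          * ‖θstar - θ + η • restrict g (supp θ' ∪ supp θ ∪ supp θstar)‖ ^ 2 :=
  hardThreshold_step_bound_general hss θ θstar g θ' η hθ hθstar hHT
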